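/- Under assumptions (A1)–(A3), the mapping f : Θ × ℝ → ℝ, f(θ,x) := E[Φ*(G(θ,Z₁) + x) − x], is lower semicontinuous, and its set S̄ of minimizers over Θ × ℝ is nonvoid and compact. -/

import Mathlib

open MeasureTheory Filter Topology Set
open scoped ENNReal NNReal

noncomputable section

/-- The Fenchel–Legendre transform `Φ*` of `Φ`, as a real-valued function on `ℝ`:
`Φ*(y) = sup_{x ≥ 0} (x * y - Φ(x))` (points where `Φ x = ∞` contribute `-∞` and are
therefore omitted from the supremum). -/
def legendre (Φ : ℝ → ℝ≥0∞) (y : ℝ) : ℝ :=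
  sSup {s : ℝ | ∃ x : ℝ, 0 ≤ x ∧ Φ x ≠ ⊤ ∧ s = x * y - (Φ x).toReal}

/-- Standing assumptions on `Φ : [0,∞) → [0,∞]`: lower semicontinuity, convexity,
`Φ(0) < ∞`, `Φ(x₀) < ∞` for some `x₀ > 1`, `inf_{x ≥ 0} Φ(x) = 0`, and the superlinear
growth condition `Φ(x)/x → ∞`. -/
structure PhiAssumptions (Φ : ℝ → ℝ≥0∞) : Prop where
  lsc : LowerSemicontinuousOn Φ (Set.Ici 0)
  convex : ∀ x ∈ Set.Ici (0:ℝ), ∀ y ∈ Set.Ici (0:ℝ), ∀ u v : ℝ, 0 ≤ u → 0 ≤ v →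
    u + v = 1 → Φ (u * x + v * y) ≤ ENNReal.ofReal u * Φ x + ENNReal.ofReal v * Φ y
  finite_zero : Φ 0 ≠ ⊤
  finite_gt_one : ∃ x₀ : ℝ, 1 < x₀ ∧ Φ x₀ ≠ ⊤
  inf_eq_zero : (⨅ x : {x : ℝ // 0 ≤ x}, Φ x.1) = 0
  superlinear : Tendsto (fun x : ℝ => Φ x / ENNReal.ofReal x) atTop (𝓝 ⊤)

/-- Left-continuous quantile function of a distribution function `F`. -/
def leftQuantile (F : ℝ → ℝ) (u : ℝ) : ℝ := sInf {t : ℝ | u ≤ F t}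

/-- Right-continuous quantile function of a distribution function `F`. -/
def rightQuantile (F : ℝ → ℝ) (u : ℝ) : ℝ := sInf {t : ℝ | u < F t}

/-- `𝓡_{ρ^Φ}(F) = inf_{x ∈ ℝ} (∫_{(0,1)} Φ*(F^←(u) + x) du - x)`. -/
def RhoPhi (Φ : ℝ → ℝ≥0∞) (F : ℝ → ℝ) : ℝ :=
  ⨅ x : ℝ, ((∫ u in Set.Ioo (0:ℝ) 1, legendre Φ (leftQuantile F u + x)) - x)

/-- `M_F`: the set of minimizers in the definition of `𝓡_{ρ^Φ}(F)`. -/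
def MPhi (Φ : ℝ → ℝ≥0∞) (F : ℝ → ℝ) : Set ℝ :=
  {x : ℝ | ((∫ u in Set.Ioo (0:ℝ) 1, legendre Φ (leftQuantile F u + x)) - x) = RhoPhi Φ F}

/-- The Euclidean norm distance on `ℝ^m × ℝ ≅ ℝ^{m+1}`. -/
def pairdist {m : ℕ} (p q : EuclideanSpace ℝ (Fin m) × ℝ) : ℝ :=
  Real.sqrt (‖p.1 - q.1‖ ^ 2 + (p.2 - q.2) ^ 2)

/-- The Euclidean norm on `ℝ^m × ℝ ≅ ℝ^{m+1}`. -/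
def pnorm {m : ℕ} (p : EuclideanSpace ℝ (Fin m) × ℝ) : ℝ :=
  Real.sqrt (‖p.1‖ ^ 2 + p.2 ^ 2)

/-- The SAA objective `X_n(ω,θ,x) = (1/n) ∑_{i<n} (Φ*(G(θ, Z_i(ω)) + x) - x)`. -/
def saaObj {Ω : Type*} {m d : ℕ} (Φ : ℝ → ℝ≥0∞)
    (G : EuclideanSpace ℝ (Fin m) → EuclideanSpace ℝ (Fin d) → ℝ)
    (Z : ℕ → Ω → EuclideanSpace ℝ (Fin d)) (n : ℕ) (ω : Ω)
    (θ : EuclideanSpace ℝ (Fin m)) (x : ℝ) : ℝ :=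
  (n : ℝ)⁻¹ * ∑ i ∈ Finset.range n, (legendre Φ (G θ (Z i ω) + x) - x)

/-- The empirical distribution function `F̂_{n,θ}(ω)` of `G(θ,Z₁(ω)),…,G(θ,Z_n(ω))`. -/
def empCDF {Ω : Type*} {m d : ℕ}
    (G : EuclideanSpace ℝ (Fin m) → EuclideanSpace ℝ (Fin d) → ℝ)
    (Z : ℕ → Ω → EuclideanSpace ℝ (Fin d)) (n : ℕ)
    (θ : EuclideanSpace ℝ (Fin m)) (ω : Ω) (t : ℝ) : ℝ :=
  (n : ℝ)⁻¹ * ∑ i ∈ Finset.range n, if G θ (Z i ω) ≤ t then (1:ℝ) else 0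

/-- The distribution function `F_θ` of `G(θ,Z)` where `Z ∼ μZ`. -/
def cdfOf {m d : ℕ} (μZ : Measure (EuclideanSpace ℝ (Fin d)))
    (G : EuclideanSpace ℝ (Fin m) → EuclideanSpace ℝ (Fin d) → ℝ)
    (θ : EuclideanSpace ℝ (Fin m)) (t : ℝ) : ℝ :=
  (μZ {z | G θ z ≤ t}).toReal

/-- `argmin 𝓡_{ρ^Φ}`: the solution set of the genuine risk averse problem
`inf_{θ ∈ Θ} 𝓡_{ρ^Φ}(F_θ)`. -/
def argminRho {m d : ℕ} (Φ : ℝ → ℝ≥0∞) (μZ : Measure (EuclideanSpace ℝ (Fin d)))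
    (G : EuclideanSpace ℝ (Fin m) → EuclideanSpace ℝ (Fin d) → ℝ)
    (Θ : Set (EuclideanSpace ℝ (Fin m))) : Set (EuclideanSpace ℝ (Fin m)) :=
  {θ ∈ Θ | RhoPhi Φ (cdfOf μZ G θ) = ⨅ θ' : Θ, RhoPhi Φ (cdfOf μZ G θ')}

/-- `S_{n,ρ}(ω)`: the solution set of `inf_{θ ∈ Θ} 𝓡_{ρ^Φ}(F̂_{n,θ})(ω)`. -/
def SnRho {Ω : Type*} {m d : ℕ} (Φ : ℝ → ℝ≥0∞)
    (G : EuclideanSpace ℝ (Fin m) → EuclideanSpace ℝ (Fin d) → ℝ)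
    (Z : ℕ → Ω → EuclideanSpace ℝ (Fin d))
    (Θ : Set (EuclideanSpace ℝ (Fin m))) (n : ℕ) (ω : Ω) :
    Set (EuclideanSpace ℝ (Fin m)) :=
  {θ ∈ Θ | RhoPhi Φ (empCDF G Z n θ ω) = ⨅ θ' : Θ, RhoPhi Φ (empCDF G Z n θ' ω)}

/-- `S_n(ω)`: minimizers of the SAA objective over `Θ × ℝ`. -/
def SnSet {Ω : Type*} {m d : ℕ} (Φ : ℝ → ℝ≥0∞)
    (G : EuclideanSpace ℝ (Fin m) → EuclideanSpace ℝ (Fin d) → ℝ)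
    (Z : ℕ → Ω → EuclideanSpace ℝ (Fin d))
    (Θ : Set (EuclideanSpace ℝ (Fin m))) (n : ℕ) (ω : Ω) :
    Set (EuclideanSpace ℝ (Fin m) × ℝ) :=
  {p : EuclideanSpace ℝ (Fin m) × ℝ | p.1 ∈ Θ ∧
    ∀ θ ∈ Θ, ∀ x : ℝ, saaObj Φ G Z n ω p.1 p.2 ≤ saaObj Φ G Z n ω θ x}

/-- `S̄`: minimizers of `(θ,x) ↦ E[Φ*(G(θ,Z₁)+x) - x]` over `Θ × ℝ`. -/
def SbarSet {m d : ℕ} (Φ : ℝ → ℝ≥0∞) (μZ : Measure (EuclideanSpace ℝ (Fin d)))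
    (G : EuclideanSpace ℝ (Fin m) → EuclideanSpace ℝ (Fin d) → ℝ)
    (Θ : Set (EuclideanSpace ℝ (Fin m))) : Set (EuclideanSpace ℝ (Fin m) × ℝ) :=
  {p : EuclideanSpace ℝ (Fin m) × ℝ | p.1 ∈ Θ ∧
    ∀ θ ∈ Θ, ∀ x : ℝ,
      (∫ z, (legendre Φ (G p.1 z + p.2) - p.2) ∂μZ) ≤ ∫ z, (legendre Φ (G θ z + x) - x) ∂μZ}

/-!
Since `Φ` grows superlinearly, `Φ*` is a finite, convex, nondecreasing function on `ℝ`, hence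
continuous. So `(θ, x) ↦ Φ*(G(θ,z) + x)` is lower semicontinuous on `Θ × ℝ` and bounded below
by `-Φ(0)`, and Fatou's lemma makes `f` lower semicontinuous. The affine minorants
`Φ*(y) ≥ x₀ y - Φ(x₀)` (with `x₀ > 1`) and `Φ*(y) ≥ -Φ(0)`, together with `G ≥ -ξ₁`, bound
`x` on every sublevel set of `f`; as `Θ` is compact, these sublevel sets are compact, so `f`
attains its infimum and the set of minimizers is a closed subset of a compact sublevel set.
-/

namespace PhiAssumptions

variable {Φ : ℝ → ℝ≥0∞} (hΦ : PhiAssumptions Φ)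
include hΦ

lemma exists_mul_le_toReal {c : ℝ} (hc : 0 ≤ c) :
    ∃ X, ∀ x ≥ X, Φ x ≠ ⊤ → c * x ≤ (Φ x).toReal := by
  obtain ⟨X, hX⟩ := eventually_atTop.1
    (hΦ.superlinear.eventually (eventually_gt_nhds (ENNReal.ofReal_lt_top (r := c))))
  refine ⟨max X 1, fun x hx hfin => ?_⟩
  have hx₁ : 1 ≤ x := (le_max_right _ _).trans hx
  have hmul : ENNReal.ofReal c * ENNReal.ofReal x ≤ Φ x :=
    (ENNReal.le_div_iff_mul_le (Or.inl (by simp; linarith)) (Or.inl ENNReal.ofReal_ne_top)).1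
      (hX x ((le_max_left _ _).trans hx)).le
  rw [← ENNReal.ofReal_mul hc] at hmul
  simpa [ENNReal.toReal_ofReal (by positivity : 0 ≤ c * x)] using ENNReal.toReal_mono hfin hmul

lemma bddAbove_legendre_set (y : ℝ) :
    BddAbove {s : ℝ | ∃ x : ℝ, 0 ≤ x ∧ Φ x ≠ ⊤ ∧ s = x * y - (Φ x).toReal} := by
  obtain ⟨X, hX⟩ := hΦ.exists_mul_le_toReal (abs_nonneg y)
  refine ⟨max X 0 * |y|, ?_⟩
  rintro s ⟨x, hx, hfin, rfl⟩
  have hxy : x * y ≤ x * |y| := mul_le_mul_of_nonneg_left (le_abs_self y) hx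
  rcases le_total (max X 0) x with hXx | hxX
  · have := hX x ((le_max_left _ _).trans hXx) hfin
    nlinarith [abs_nonneg y, le_max_right X 0]
  · nlinarith [abs_nonneg y, ENNReal.toReal_nonneg (a := Φ x)]

lemma le_legendre {x : ℝ} (hx : 0 ≤ x) (hfin : Φ x ≠ ⊤) (y : ℝ) :
    x * y - (Φ x).toReal ≤ legendre Φ y :=
  le_csSup (hΦ.bddAbove_legendre_set y) ⟨x, hx, hfin, rfl⟩

lemma neg_le_legendre (y : ℝ) : -(Φ 0).toReal ≤ legendre Φ y := by
  simpa using hΦ.le_legendre le_rfl hΦ.finite_zero y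

lemma legendre_le {y c : ℝ} (h : ∀ x, 0 ≤ x → Φ x ≠ ⊤ → x * y - (Φ x).toReal ≤ c) :
    legendre Φ y ≤ c :=
  csSup_le ⟨_, 0, le_rfl, hΦ.finite_zero, rfl⟩ (by rintro s ⟨x, hx, hfin, rfl⟩; exact h x hx hfin)

lemma monotone_legendre : Monotone (legendre Φ) := fun _ _ hy =>
  hΦ.legendre_le fun _ hx hfin =>
    (sub_le_sub_right (mul_le_mul_of_nonneg_left hy hx) _).trans (hΦ.le_legendre hx hfin _)

lemma convexOn_legendre : ConvexOn ℝ univ (legendre Φ) := by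
  refine ⟨convex_univ, fun y₁ _ y₂ _ a b ha hb hab => hΦ.legendre_le fun x hx hfin => ?_⟩
  have h₁ := mul_le_mul_of_nonneg_left (hΦ.le_legendre hx hfin y₁) ha
  have h₂ := mul_le_mul_of_nonneg_left (hΦ.le_legendre hx hfin y₂) hb
  simp only [smul_eq_mul]
  linear_combination h₁ + h₂ + (Φ x).toReal * hab

lemma continuous_legendre : Continuous (legendre Φ) :=
  continuousOn_univ.1 (hΦ.convexOn_legendre.continuousOn isOpen_univ)

lemma legendre_add_le (a b : ℝ) :
    legendre Φ (a + b) ≤ (legendre Φ (2 * a) + legendre Φ (2 * b)) / 2 := by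
  have := hΦ.convexOn_legendre.2 (mem_univ (2 * a)) (mem_univ (2 * b))
    (by norm_num : (0 : ℝ) ≤ 1 / 2) (by norm_num : (0 : ℝ) ≤ 1 / 2) (by norm_num)
  have hab : (1 / 2 : ℝ) * (2 * a) + 1 / 2 * (2 * b) = a + b := by ring
  simp only [smul_eq_mul, hab] at this
  linarith

variable {α : Type*} [MeasurableSpace α] {μ : Measure α}

lemma integrable_legendre_add [IsFiniteMeasure μ] {g : α → ℝ} (hg : AEStronglyMeasurable g μ)
    (hg₂ : Integrable (fun a => legendre Φ (2 * |g a|)) μ) (x : ℝ) :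
    Integrable (fun a => legendre Φ (g a + x)) μ := by
  refine (((hg₂.add (integrable_const (legendre Φ (2 * |x|)))).div_const 2).add
    (integrable_const (2 * (Φ 0).toReal))).mono'
    (hΦ.continuous_legendre.comp_aestronglyMeasurable (hg.add_const x)) (ae_of_all _ fun a => ?_)
  -- upper bound from midpoint convexity, lower bound `-Φ(0)`
  have hmid := hΦ.legendre_add_le (g a) x
  have hG := hΦ.monotone_legendre (by linarith [le_abs_self (g a)] : 2 * g a ≤ 2 * |g a|)
  have hx := hΦ.monotone_legendre (by linarith [le_abs_self x] : 2 * x ≤ 2 * |x|)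
  have hlow := hΦ.neg_le_legendre (g a + x)
  have hlowG := hΦ.neg_le_legendre (2 * |g a|)
  have hlowx := hΦ.neg_le_legendre (2 * |x|)
  have hΦ₀ := ENNReal.toReal_nonneg (a := Φ 0)
  simp only [Pi.add_apply, Real.norm_eq_abs, abs_le]
  constructor <;> linarith

lemma le_integral_legendre_add_sub [IsProbabilityMeasure μ] {g ξ : α → ℝ} {x t : ℝ}
    (hint : Integrable (fun a => legendre Φ (g a + x)) μ) (hξ : Integrable ξ μ)
    (hgξ : ∀ a, -ξ a ≤ g a) (ht : 0 ≤ t) (hfin : Φ t ≠ ⊤) :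
    (t - 1) * x - (Φ t).toReal - t * ∫ a, ξ a ∂μ ≤ ∫ a, (legendre Φ (g a + x) - x) ∂μ := by
  set K := (t - 1) * x - (Φ t).toReal
  calc K - t * ∫ a, ξ a ∂μ = ∫ a, (K - t * ξ a) ∂μ := by
        rw [integral_sub (integrable_const K) (hξ.const_mul t), integral_const_mul]
        simp
    _ ≤ ∫ a, (legendre Φ (g a + x) - x) ∂μ := by
        refine integral_mono ((integrable_const K).sub (hξ.const_mul t))
          (hint.sub (integrable_const x)) fun a => ?_
        have := hΦ.le_legendre ht hfin (g a + x)
        have := mul_le_mul_of_nonneg_left (hgξ a) ht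
        simp only [K]
        linarith

lemma mem_Icc_of_integral_legendre_add_sub_le [IsProbabilityMeasure μ] {g ξ : α → ℝ}
    {x x₀ M : ℝ} (hint : Integrable (fun a => legendre Φ (g a + x)) μ) (hξ : Integrable ξ μ)
    (hgξ : ∀ a, -ξ a ≤ g a) (hx₀ : 1 < x₀) (hfin : Φ x₀ ≠ ⊤)
    (hM : ∫ a, (legendre Φ (g a + x) - x) ∂μ ≤ M) :
    x ∈ Icc (-(M + (Φ 0).toReal)) ((M + (Φ x₀).toReal + x₀ * ∫ a, ξ a ∂μ) / (x₀ - 1)) := by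
  have h₀ := hΦ.le_integral_legendre_add_sub hint hξ hgξ le_rfl hΦ.finite_zero
  have h₁ := hΦ.le_integral_legendre_add_sub hint hξ hgξ (by linarith) hfin
  constructor
  · linarith
  · rw [le_div_iff₀ (by linarith)]
    linarith

end PhiAssumptions

section Semicontinuity

variable {X : Type*} [TopologicalSpace X]

lemma lowerSemicontinuous_of_ofReal {h : X → ℝ} (hpos : ∀ x, 0 ≤ h x)
    (hh : LowerSemicontinuous fun x => ENNReal.ofReal (h x)) : LowerSemicontinuous h := by
  intro x y hy
  rcases lt_or_ge y 0 with hy₀ | hy₀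
  · exact Eventually.of_forall fun x' => hy₀.trans_le (hpos x')
  · filter_upwards [hh x _ ((ENNReal.ofReal_lt_ofReal_iff_of_nonneg hy₀).2 hy)] with x' hx'
    exact (ENNReal.ofReal_lt_ofReal_iff_of_nonneg hy₀).1 hx'

lemma LowerSemicontinuousOn.isClosed_inter_preimage_Iic {γ : Type*} [LinearOrder γ]
    {f : X → γ} {s : Set X} (hf : LowerSemicontinuousOn f s) (hs : IsClosed s) (c : γ) :
    IsClosed (s ∩ f ⁻¹' Iic c) := by
  obtain ⟨v, hv, heq⟩ := lowerSemicontinuousOn_iff_preimage_Iic.1 hf c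
  exact heq ▸ hs.inter hv

lemma LowerSemicontinuousOn.argmin_nonempty_isCompact {γ : Type*} [LinearOrder γ]
    {f : X → γ} {s : Set X} (hf : LowerSemicontinuousOn f s) {a : X} (ha : a ∈ s)
    (hK : IsCompact (s ∩ f ⁻¹' Iic (f a))) :
    {x | x ∈ s ∧ IsMinOn f s x}.Nonempty ∧ IsCompact {x | x ∈ s ∧ IsMinOn f s x} := by
  obtain ⟨x, ⟨hxs, hxa⟩, hxmin⟩ :=
    LowerSemicontinuousOn.exists_isMinOn (s := s ∩ f ⁻¹' Iic (f a)) ⟨a, ha, le_rfl⟩ hK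
      (hf.mono inter_subset_left)
  have hmin : IsMinOn f s x := fun y hy => by
    rcases le_total (f y) (f a) with hya | hay
    · exact hxmin ⟨hy, hya⟩
    · exact (hxa : f x ≤ f a).trans hay
  have heq : {y | y ∈ s ∧ IsMinOn f s y} = (s ∩ f ⁻¹' Iic (f a)) ∩ f ⁻¹' Iic (f x) := by
    ext y
    refine ⟨fun ⟨hys, hy⟩ => ⟨⟨hys, (hy hxs).trans hxa⟩, hy hxs⟩, fun ⟨⟨hys, _⟩, hyx⟩ => ?_⟩
    exact ⟨hys, fun z hz => (hyx : f y ≤ f x).trans (hmin hz)⟩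
  exact ⟨⟨x, hxs, hmin⟩,
    heq ▸ (hf.mono inter_subset_left).isCompact_inter_preimage_Iic hK (f x)⟩

variable [FirstCountableTopology X] {α : Type*} [MeasurableSpace α] {μ : Measure α}

lemma lowerSemicontinuous_lintegral {F : X → α → ℝ≥0∞} (hF_meas : ∀ x, AEMeasurable (F x) μ)
    (hF : ∀ a, LowerSemicontinuous (F · a)) : LowerSemicontinuous fun x => ∫⁻ a, F x a ∂μ :=
  lowerSemicontinuous_iff_le_liminf.2 fun x =>
    (lintegral_mono fun a => (hF a).le_liminf x).trans (lintegral_liminf_le' hF_meas)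

lemma lowerSemicontinuous_integral_of_forall_le [IsFiniteMeasure μ] {F : X → α → ℝ} {C : ℝ}
    (hF_int : ∀ x, Integrable (F x) μ) (hF_le : ∀ x a, C ≤ F x a)
    (hF : ∀ a, LowerSemicontinuous (F · a)) : LowerSemicontinuous fun x => ∫ a, F x a ∂μ := by
  have hshift : LowerSemicontinuous fun x => ∫ a, (F x a - C) ∂μ := by
    refine lowerSemicontinuous_of_ofReal
      (fun x => integral_nonneg fun a => sub_nonneg.2 (hF_le x a)) ?_
    have hofReal (x : X) :
        ENNReal.ofReal (∫ a, (F x a - C) ∂μ) = ∫⁻ a, ENNReal.ofReal (F x a - C) ∂μ :=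
      ofReal_integral_eq_lintegral_ofReal ((hF_int x).sub (integrable_const C))
        (ae_of_all _ fun a => sub_nonneg.2 (hF_le x a))
    simp_rw [hofReal]
    exact lowerSemicontinuous_lintegral
      (fun x => ((hF_int x).sub (integrable_const C)).aemeasurable.ennreal_ofReal)
      fun a => ENNReal.continuous_ofReal.comp_lowerSemicontinuous
        ((hF a).add continuous_const.lowerSemicontinuous) ENNReal.ofReal_mono
  have heq : (fun x => ∫ a, F x a ∂μ) = fun x => ∫ a, (F x a - C) ∂μ + ∫ _, C ∂μ := by
    ext x
    rw [integral_sub (hF_int x) (integrable_const C), sub_add_cancel]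
  exact heq ▸ hshift.add continuous_const.lowerSemicontinuous

lemma lowerSemicontinuousOn_integral_of_forall_le [IsFiniteMeasure μ] {F : X → α → ℝ} {C : ℝ}
    {s : Set X} (hF_int : ∀ x ∈ s, Integrable (F x) μ) (hF_le : ∀ x ∈ s, ∀ a, C ≤ F x a)
    (hF : ∀ a, LowerSemicontinuousOn (F · a) s) :
    LowerSemicontinuousOn (fun x => ∫ a, F x a ∂μ) s := by
  rw [← lowerSemicontinuous_restrict_iff]
  exact lowerSemicontinuous_integral_of_forall_le (F := fun x : s => F x) (fun x => hF_int x x.2)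
    (fun x => hF_le x x.2) fun a => lowerSemicontinuous_restrict_iff.2 (hF a)

end Semicontinuity

lemma PhiAssumptions.lowerSemicontinuousOn_integral_legendre_add_sub {Φ : ℝ → ℝ≥0∞}
    (hΦ : PhiAssumptions Φ) {T α : Type*} [TopologicalSpace T] [FirstCountableTopology T]
    [MeasurableSpace α] {μ : Measure α} [IsProbabilityMeasure μ] {G : T → α → ℝ} {Θ : Set T}
    (hG : ∀ a, LowerSemicontinuousOn (G · a) Θ)
    (hint : ∀ θ ∈ Θ, ∀ x, Integrable (fun a => legendre Φ (G θ a + x)) μ) :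
    LowerSemicontinuousOn (fun p : T × ℝ => ∫ a, (legendre Φ (G p.1 a + p.2) - p.2) ∂μ)
      (Θ ×ˢ univ) := by
  have hpoint (a : α) : LowerSemicontinuousOn (fun p : T × ℝ => legendre Φ (G p.1 a + p.2))
      (Θ ×ˢ univ) :=
    hΦ.continuous_legendre.comp_lowerSemicontinuousOn
      (((hG a).comp continuousOn_fst fun _ hp => hp.1).add
        continuous_snd.continuousOn.lowerSemicontinuousOn) hΦ.monotone_legendre
  have hlsc := (lowerSemicontinuousOn_integral_of_forall_le (fun p hp => hint p.1 hp.1 p.2)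
    (fun p _ a => hΦ.neg_le_legendre (G p.1 a + p.2)) hpoint).add
    continuous_snd.neg.continuousOn.lowerSemicontinuousOn
  refine fun p hp => LowerSemicontinuousWithinAt.congr_of_eventuallyEq (hlsc p hp) hp
    (eventually_mem_nhdsWithin.mono fun q hq => ?_)
  dsimp only [Pi.neg_apply]
  rw [integral_sub (hint _ hq.1 _) (integrable_const _), integral_const, sub_eq_add_neg]
  simp

theorem limit_objective_lsc_argmin_nonempty_compact_general
    {m d : ℕ} (Θ : Set (EuclideanSpace ℝ (Fin m))) (hΘc : IsCompact Θ) (hΘne : Θ.Nonempty)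
    (Φ : ℝ → ℝ≥0∞) (hΦ : PhiAssumptions Φ)
    (μZ : Measure (EuclideanSpace ℝ (Fin d))) [IsProbabilityMeasure μZ]
    (G : EuclideanSpace ℝ (Fin m) → EuclideanSpace ℝ (Fin d) → ℝ)
    (hA1meas : Measurable fun p : Θ × EuclideanSpace ℝ (Fin d) => G p.1 p.2)
    (hA1lsc : ∀ z, LowerSemicontinuousOn (fun θ => G θ z) Θ)
    (ξ₁ : EuclideanSpace ℝ (Fin d) → ℝ) (hξ₁ : Integrable ξ₁ μZ)
    (hA2 : ∀ θ ∈ Θ, ∀ z, |G θ z| ≤ ξ₁ z)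
    (hA3mem : ∀ θ ∈ Θ, ∀ c : ℝ, 0 < c → Integrable (fun z => legendre Φ (c * |G θ z|)) μZ)
 :
    LowerSemicontinuousOn
      (fun p : EuclideanSpace ℝ (Fin m) × ℝ => ∫ z, (legendre Φ (G p.1 z + p.2) - p.2) ∂μZ)
      (Θ ×ˢ (Set.univ : Set ℝ)) ∧
    (SbarSet Φ μZ G Θ).Nonempty ∧ IsCompact (SbarSet Φ μZ G Θ) := by
  set f := fun p : EuclideanSpace ℝ (Fin m) × ℝ => ∫ z, (legendre Φ (G p.1 z + p.2) - p.2) ∂μZ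
  have hint (θ) (hθ : θ ∈ Θ) (x : ℝ) : Integrable (fun z => legendre Φ (G θ z + x)) μZ :=
    hΦ.integrable_legendre_add
      (hA1meas.comp (measurable_prodMk_left (x := (⟨θ, hθ⟩ : Θ)))).aestronglyMeasurable
      (hA3mem θ hθ 2 two_pos) x
  have hf : LowerSemicontinuousOn f (Θ ×ˢ univ) :=
    hΦ.lowerSemicontinuousOn_integral_legendre_add_sub hA1lsc hint
  obtain ⟨θ₀, hθ₀⟩ := hΘne
  obtain ⟨x₀, hx₀, hx₀fin⟩ := hΦ.finite_gt_one
  have hsub : Θ ×ˢ univ ∩ f ⁻¹' Iic (f (θ₀, 0)) ⊆ Θ ×ˢ Icc _ _ := fun p ⟨⟨hpΘ, _⟩, hp⟩ =>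
    ⟨hpΘ, hΦ.mem_Icc_of_integral_legendre_add_sub_le (hint p.1 hpΘ p.2) hξ₁
      (fun z => neg_le_of_abs_le (hA2 p.1 hpΘ z)) hx₀ hx₀fin hp⟩
  have hK : IsCompact (Θ ×ˢ univ ∩ f ⁻¹' Iic (f (θ₀, 0))) :=
    (hΘc.prod isCompact_Icc).of_isClosed_subset
      (hf.isClosed_inter_preimage_Iic (hΘc.isClosed.prod isClosed_univ) _) hsub
  have hS : SbarSet Φ μZ G Θ = {p | p ∈ Θ ×ˢ univ ∧ IsMinOn f (Θ ×ˢ univ) p} := by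
    ext p
    simp only [SbarSet, isMinOn_iff, mem_ofPred_eq, mem_prod, mem_univ, and_true, Prod.forall, f]
    exact and_congr_right fun _ => ⟨fun h θ x hθ => h θ hθ x, fun h θ hθ x => h θ x hθ⟩
  obtain ⟨hne, hcpt⟩ := hf.argmin_nonempty_isCompact ⟨hθ₀, mem_univ _⟩ hK
  exact ⟨hf, hS ▸ hne, hS ▸ hcpt⟩

/-- Under (A 1)–(A 3), the mapping
`f(θ,x) = E[Φ*(G(θ,Z₁)+x) - x]` is lower semicontinuous on `Θ × ℝ` and its set `S̄` of
minimizers over `Θ × ℝ` is nonvoid and compact. -/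
theorem limit_objective_lsc_argmin_nonempty_compact
    {Ω : Type*} [MeasurableSpace Ω] (P : Measure Ω) [IsProbabilityMeasure P]
    (hAtomless : ∀ A : Set Ω, MeasurableSet A → P A ≠ 0 →
      ∃ B : Set Ω, B ⊆ A ∧ MeasurableSet B ∧ P B ≠ 0 ∧ P B ≠ P A)
    {m d : ℕ} (Θ : Set (EuclideanSpace ℝ (Fin m))) (hΘc : IsCompact Θ) (hΘne : Θ.Nonempty)
    (Φ : ℝ → ℝ≥0∞) (hΦ : PhiAssumptions Φ)
    (Z : ℕ → Ω → EuclideanSpace ℝ (Fin d)) (hZmeas : ∀ i, Measurable (Z i))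
    (μZ : Measure (EuclideanSpace ℝ (Fin d))) [IsProbabilityMeasure μZ]
    (hZlaw : ∀ i, P.map (Z i) = μZ)
    (hZindep : ProbabilityTheory.iIndepFun Z P)
    (G : EuclideanSpace ℝ (Fin m) → EuclideanSpace ℝ (Fin d) → ℝ)
    (hA1meas : Measurable fun p : Θ × EuclideanSpace ℝ (Fin d) => G p.1 p.2)
    (hA1lsc : ∀ z, LowerSemicontinuousOn (fun θ => G θ z) Θ)
    (ξ₁ : EuclideanSpace ℝ (Fin d) → ℝ) (hξ₁ : Integrable ξ₁ μZ)
    (hA2 : ∀ θ ∈ Θ, ∀ z, |G θ z| ≤ ξ₁ z)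
    (hA3mem : ∀ θ ∈ Θ, ∀ c : ℝ, 0 < c → Integrable (fun z => legendre Φ (c * |G θ z|)) μZ)
    (ξ₂ : EuclideanSpace ℝ (Fin d) → ℝ) (hξ₂ : Integrable ξ₂ μZ)
    (hA3 : ∀ θ ∈ Θ, ∀ z, |legendre Φ (G θ z)| ≤ ξ₂ z)
 :
    LowerSemicontinuousOn
      (fun p : EuclideanSpace ℝ (Fin m) × ℝ => ∫ z, (legendre Φ (G p.1 z + p.2) - p.2) ∂μZ)
      (Θ ×ˢ (Set.univ : Set ℝ)) ∧
    (SbarSet Φ μZ G Θ).Nonempty ∧ IsCompact (SbarSet Φ μZ G Θ) :=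
  limit_objective_lsc_argmin_nonempty_compact_general Θ hΘc hΘne Φ hΦ μZ G hA1meas hA1lsc ξ₁ hξ₁ hA2
    hA3mem
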